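/- arXiv:1712.03772 — 2 statements merged into one kernel-verified Lean document; each statement's English description precedes it below -/
import Mathlib

section
/- For every x ∈ (0,1): (1−π/3)·x + (1/6−π/18)·x³ + (3/40−5π/216)·x⁵ + (5/112−17π/1296)·x⁷ + (35/1152−269π/31104)·x⁹ + (63/2816−1163π/186624)·x¹¹ < arcsin x − πx/(2+√(1−x²)) < (1−π/3)·x + (1/6−π/18)·x³ + (3/40−5π/216)·x⁵ + (5/112−17π/1296)·x⁷ + (35/1152−269π/31104)·x⁹ + (−53089/40320 + 13493π/31104)·x¹¹. -/
/-!
Let `F(x) = arcsin x - π x / (2 + √(1 - x²))`, let `T` be its Taylor polynomial of degree 9 at `0`,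
`c₁₁` its Taylor coefficient of `x¹¹`, and `N = F - T`. In the variable `s = √(1 - x²)` both
`N'(x) - 11 c₁₁ x¹⁰` and `x N''(x) - 10 N'(x)` are rational functions of `s` whose numerators
factor as `(1 - s)⁶ (A(s) - π B(s))`, with `A - 3.15 B` and `B` having positive coefficients; as
`π < 3.15` they are positive on `(0, 1)`.

The first fact makes `N(x) - c₁₁ x¹¹` increasing from `0`: the lower bound. The second shows that
`x N'(x) - 11 N(x)`, which vanishes at `0`, is positive, so `N(x) / x¹¹` increases on `(0, 1]`;
since `F(1) = π / 2 - π / 2 = 0`, its value at `1` is `-T(1)`, the constant of the upper bound.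
-/

open Real Set

lemma pos_of_hasDerivAt_pos {g g' : ℝ → ℝ} {b : ℝ} (hg : ContinuousOn g (Ico 0 b))
    (hg' : ∀ x ∈ Ioo 0 b, HasDerivAt g (g' x) x) (hpos : ∀ x ∈ Ioo 0 b, 0 < g' x) (h0 : g 0 = 0)
    {x : ℝ} (hx : x ∈ Ioo 0 b) : 0 < g x := by
  have hmono : StrictMonoOn g (Ico 0 b) :=
    strictMonoOn_of_hasDerivWithinAt_pos (convex_Ico 0 b) hg
      (fun y hy => (hg' y (by rwa [interior_Ico] at hy)).hasDerivWithinAt)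
      (fun y hy => hpos y (by rwa [interior_Ico] at hy))
  simpa [h0] using hmono (left_mem_Ico.2 (hx.1.trans hx.2)) (Ioo_subset_Ico_self hx) hx.1

lemma mul_lt_mul_deriv_of_deriv2 {f f' f'' : ℝ → ℝ} {b c : ℝ}
    (hf : ∀ x ∈ Ico 0 b, HasDerivAt f (f' x) x) (hf' : ∀ x ∈ Ico 0 b, HasDerivAt f' (f'' x) x)
    (h : ∀ x ∈ Ioo 0 b, (c - 1) * f' x < x * f'' x) (h0 : f 0 = 0) {x : ℝ} (hx : x ∈ Ioo 0 b) :
    c * f x < x * f' x := by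
  have hg : ∀ y ∈ Ico 0 b,
      HasDerivAt (fun y => y * f' y - c * f y) (f' y + y * f'' y - c * f' y) y :=
    fun y hy => (((hasDerivAt_id' y).mul (hf' y hy)).sub ((hf y hy).const_mul c)).congr_deriv
      (by ring)
  have := pos_of_hasDerivAt_pos (fun y hy => (hg y hy).continuousAt.continuousWithinAt)
    (fun y hy => hg y (Ioo_subset_Ico_self hy)) (fun y hy => by linarith [h y hy]) (by simp [h0]) hx
  linarith

lemma strictMonoOn_div_pow_of_lt_mul_deriv {f f' : ℝ → ℝ} {b : ℝ} (n : ℕ)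
    (hf : ContinuousOn f (Ioc 0 b)) (hf' : ∀ x ∈ Ioo 0 b, HasDerivAt f (f' x) x)
    (h : ∀ x ∈ Ioo 0 b, n * f x < x * f' x) :
    StrictMonoOn (fun x => f x / x ^ n) (Ioc 0 b) := by
  refine strictMonoOn_of_hasDerivWithinAt_pos
    (f' := fun x => (f' x * x ^ n - f x * (n * x ^ (n - 1))) / (x ^ n) ^ 2) (convex_Ioc 0 b)
    (hf.div (continuousOn_pow n) fun x hx => pow_ne_zero n hx.1.ne') (fun x hx => ?_)
    (fun x hx => ?_)
  all_goals rw [interior_Ioc] at hx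
  · exact ((hf' x hx).div (hasDerivAt_pow n x) (pow_ne_zero n hx.1.ne')).hasDerivWithinAt
  · have hpow : (n : ℝ) * x ^ (n - 1) * x = n * x ^ n := by
      cases n <;> simp [pow_succ, mul_assoc]
    have hnum : 0 < (f' x * x ^ n - f x * (n * x ^ (n - 1))) * x := by
      linear_combination mul_pos (pow_pos hx.1 n) (sub_pos.2 (h x hx)) + f x * hpow
    exact div_pos (pos_of_mul_pos_left hnum hx.1.le) (pow_pos (pow_pos hx.1 n) 2)

lemma hasDerivAt_sqrt_one_sub_sq {x : ℝ} (hx : x ∈ Ioo (-1) 1) :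
    HasDerivAt (fun y => √(1 - y ^ 2)) (-x / √(1 - x ^ 2)) x := by
  have hpos : 0 < 1 - x ^ 2 := by nlinarith [hx.1, hx.2]
  refine (((hasDerivAt_pow 2 x).const_sub 1).sqrt hpos.ne').congr_deriv ?_
  field_simp
  ring

lemma sqrt_one_sub_sq_mem_Ioo {x : ℝ} (hx : x ∈ Ioo 0 1) : √(1 - x ^ 2) ∈ Ioo 0 1 :=
  ⟨sqrt_pos.2 (by nlinarith [hx.1, hx.2]), (sqrt_lt' one_pos).2 (by nlinarith [hx.1])⟩

lemma one_sub_sqrt_one_sub_sq_sq {x : ℝ} (hx : x ^ 2 ≤ 1) : 1 - √(1 - x ^ 2) ^ 2 = x ^ 2 := by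
  rw [sq_sqrt (sub_nonneg.2 hx), sub_sub_cancel]

noncomputable def shaferRemainder (x : ℝ) : ℝ :=
  arcsin x - π * x / (2 + √(1 - x ^ 2))
    - ((1 - π / 3) * x + (1 / 6 - π / 18) * x ^ 3 + (3 / 40 - 5 * π / 216) * x ^ 5
      + (5 / 112 - 17 * π / 1296) * x ^ 7 + (35 / 1152 - 269 * π / 31104) * x ^ 9)

/-- The derivative of `shaferRemainder` at `x`, as a function of `s = √(1 - x ^ 2)`. -/
noncomputable def shaferRemainderDeriv (s : ℝ) : ℝ :=
  1 / s - π * (2 * s + 1) / (s * (2 + s) ^ 2)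
    - ((1 - π / 3) + 3 * (1 / 6 - π / 18) * (1 - s ^ 2)
      + 5 * (3 / 40 - 5 * π / 216) * (1 - s ^ 2) ^ 2
      + 7 * (5 / 112 - 17 * π / 1296) * (1 - s ^ 2) ^ 3
      + 9 * (35 / 1152 - 269 * π / 31104) * (1 - s ^ 2) ^ 4)

noncomputable def shaferRemainderDeriv' (s : ℝ) : ℝ :=
  -1 / s ^ 2 + π * (4 * s ^ 2 + 3 * s + 2) / (s ^ 2 * (2 + s) ^ 3)
    + 2 * s * (3 * (1 / 6 - π / 18) + 10 * (3 / 40 - 5 * π / 216) * (1 - s ^ 2)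
      + 21 * (5 / 112 - 17 * π / 1296) * (1 - s ^ 2) ^ 2
      + 36 * (35 / 1152 - 269 * π / 31104) * (1 - s ^ 2) ^ 3)

lemma continuous_shaferRemainder : Continuous shaferRemainder := by
  unfold shaferRemainder
  refine (continuous_arcsin.sub (Continuous.div (by fun_prop) (by fun_prop) fun x => ?_)).sub
    (by fun_prop)
  positivity

lemma shaferRemainder_zero : shaferRemainder 0 = 0 := by
  simp [shaferRemainder]

lemma shaferRemainder_one : shaferRemainder 1 = -(53089 / 40320) + 13493 * π / 31104 := by
  norm_num [shaferRemainder, arcsin_one]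
  ring

lemma hasDerivAt_shaferRemainder {x : ℝ} (hx : x ∈ Ioo (-1) 1) :
    HasDerivAt shaferRemainder (shaferRemainderDeriv √(1 - x ^ 2)) x := by
  have hpos : 0 < 1 - x ^ 2 := by nlinarith [hx.1, hx.2]
  have hss := sq_sqrt hpos.le
  have hquot : HasDerivAt (fun y => π * y / (2 + √(1 - y ^ 2)))
      (π * (2 * √(1 - x ^ 2) + 1) / (√(1 - x ^ 2) * (2 + √(1 - x ^ 2)) ^ 2)) x := by
    refine (((hasDerivAt_id' x).const_mul π).fun_div
      ((hasDerivAt_sqrt_one_sub_sq hx).const_add 2) (by positivity)).congr_deriv ?_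
    field_simp
    linear_combination hss
  have hpoly := (((((hasDerivAt_id' x).const_mul (1 - π / 3)).add
    ((hasDerivAt_pow 3 x).const_mul (1 / 6 - π / 18))).add
    ((hasDerivAt_pow 5 x).const_mul (3 / 40 - 5 * π / 216))).add
    ((hasDerivAt_pow 7 x).const_mul (5 / 112 - 17 * π / 1296))).add
    ((hasDerivAt_pow 9 x).const_mul (35 / 1152 - 269 * π / 31104))
  refine (((hasDerivAt_arcsin (by linarith [hx.1]) hx.2.ne).sub hquot).sub hpoly).congr_deriv ?_
  unfold shaferRemainderDeriv
  rw [hss]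
  ring

lemma hasDerivAt_shaferRemainderDeriv {s : ℝ} (hs : 0 < s) :
    HasDerivAt shaferRemainderDeriv (shaferRemainderDeriv' s) s := by
  have hinv : HasDerivAt (fun s : ℝ => 1 / s) (-1 / s ^ 2) s := by
    simpa [one_div, neg_div] using hasDerivAt_inv hs.ne'
  have hquot := ((((hasDerivAt_id' s).const_mul 2).add_const 1).const_mul π).fun_div
    ((hasDerivAt_id' s).fun_mul (((hasDerivAt_id' s).const_add 2).fun_pow 2))
    (mul_pos hs (by positivity)).ne'
  have hsq : HasDerivAt (fun s : ℝ => 1 - s ^ 2) (-(2 * s)) s := by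
    simpa using (hasDerivAt_pow 2 s).const_sub 1
  have hpoly := ((((hsq.const_mul (3 * (1 / 6 - π / 18))).const_add (1 - π / 3)).add
    ((hsq.fun_pow 2).const_mul (5 * (3 / 40 - 5 * π / 216)))).add
    ((hsq.fun_pow 3).const_mul (7 * (5 / 112 - 17 * π / 1296)))).add
    ((hsq.fun_pow 4).const_mul (9 * (35 / 1152 - 269 * π / 31104)))
  refine ((hinv.sub hquot).sub hpoly).congr_deriv ?_
  unfold shaferRemainderDeriv'
  field_simp
  ring

lemma hasDerivAt_shaferRemainderDeriv_sqrt {x : ℝ} (hx : x ∈ Ioo (-1) 1) :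
    HasDerivAt (fun y => shaferRemainderDeriv √(1 - y ^ 2))
      (shaferRemainderDeriv' √(1 - x ^ 2) * (-x / √(1 - x ^ 2))) x := by
  have hs : 0 < √(1 - x ^ 2) := sqrt_pos.2 (by nlinarith [hx.1, hx.2])
  exact (hasDerivAt_shaferRemainderDeriv hs).comp x (hasDerivAt_sqrt_one_sub_sq hx)

lemma lt_shaferRemainderDeriv {s : ℝ} (hs : s ∈ Ioo 0 1) :
    11 * (63 / 2816 - 1163 * π / 186624) * (1 - s ^ 2) ^ 5 < shaferRemainderDeriv s := by
  obtain ⟨hs0, hs1⟩ := hs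
  have key : shaferRemainderDeriv s - 11 * (63 / 2816 - 1163 * π / 186624) * (1 - s ^ 2) ^ 5
      = (1 - s) ^ 6 * ((4 + 1099 / 64 * s + 2125 / 64 * s ^ 2 + 9467 / 256 * s ^ 3
          + 3241 / 128 * s ^ 4 + 1351 / 128 * s ^ 5 + 315 / 128 * s ^ 6 + 63 / 256 * s ^ 7)
        - π * (1 + 213881 / 46656 * s + 424079 / 46656 * s ^ 2 + 1909273 / 186624 * s ^ 3
          + 218857 / 31104 * s ^ 4 + 274183 / 93312 * s ^ 5 + 63965 / 93312 * s ^ 6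
          + 12793 / 186624 * s ^ 7)) / (s * (2 + s) ^ 2) := by
    unfold shaferRemainderDeriv
    field_simp
    ring
  have hcert : 0 < (4 + 1099 / 64 * s + 2125 / 64 * s ^ 2 + 9467 / 256 * s ^ 3
          + 3241 / 128 * s ^ 4 + 1351 / 128 * s ^ 5 + 315 / 128 * s ^ 6 + 63 / 256 * s ^ 7)
        - π * (1 + 213881 / 46656 * s + 424079 / 46656 * s ^ 2 + 1909273 / 186624 * s ^ 3
          + 218857 / 31104 * s ^ 4 + 274183 / 93312 * s ^ 5 + 63965 / 93312 * s ^ 6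
          + 12793 / 186624 * s ^ 7) := by
    have := pi_lt_d2
    have h2 := pow_pos hs0 2; have h3 := pow_pos hs0 3; have h4 := pow_pos hs0 4
    have h5 := pow_pos hs0 5; have h6 := pow_pos hs0 6; have h7 := pow_pos hs0 7
    nlinarith
  have := div_pos (mul_pos (pow_pos (sub_pos.2 hs1) 6) hcert) (by positivity : 0 < s * (2 + s) ^ 2)
  linarith

lemma mul_shaferRemainderDeriv_lt {s : ℝ} (hs : s ∈ Ioo 0 1) :
    10 * shaferRemainderDeriv s < -(1 - s ^ 2) * shaferRemainderDeriv' s / s := by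
  obtain ⟨hs0, hs1⟩ := hs
  have key : -(1 - s ^ 2) * shaferRemainderDeriv' s / s - 10 * shaferRemainderDeriv s
      = (1 - s) ^ 6 * ((8 + 60 * s + 158 * s ^ 2 + 1771 / 8 * s ^ 3 + 3021 / 16 * s ^ 4
          + 3265 / 32 * s ^ 5 + 2195 / 64 * s ^ 6 + 105 / 16 * s ^ 7 + 35 / 64 * s ^ 8)
        - π * (2 + 15 * s + 42 * s ^ 2 + 39575 / 648 * s ^ 3 + 22915 / 432 * s ^ 4
          + 925 / 32 * s ^ 5 + 50551 / 5184 * s ^ 6 + 269 / 144 * s ^ 7 + 269 / 1728 * s ^ 8))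
        / (s ^ 3 * (2 + s) ^ 3) := by
    unfold shaferRemainderDeriv shaferRemainderDeriv'
    field_simp
    ring
  have hcert : 0 < (8 + 60 * s + 158 * s ^ 2 + 1771 / 8 * s ^ 3 + 3021 / 16 * s ^ 4
          + 3265 / 32 * s ^ 5 + 2195 / 64 * s ^ 6 + 105 / 16 * s ^ 7 + 35 / 64 * s ^ 8)
        - π * (2 + 15 * s + 42 * s ^ 2 + 39575 / 648 * s ^ 3 + 22915 / 432 * s ^ 4
          + 925 / 32 * s ^ 5 + 50551 / 5184 * s ^ 6 + 269 / 144 * s ^ 7 + 269 / 1728 * s ^ 8) := by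
    have := pi_lt_d2
    have h2 := pow_pos hs0 2; have h3 := pow_pos hs0 3; have h4 := pow_pos hs0 4
    have h5 := pow_pos hs0 5; have h6 := pow_pos hs0 6; have h7 := pow_pos hs0 7
    have h8 := pow_pos hs0 8
    nlinarith
  have := div_pos (mul_pos (pow_pos (sub_pos.2 hs1) 6) hcert)
    (by positivity : 0 < s ^ 3 * (2 + s) ^ 3)
  linarith

lemma lt_shaferRemainderDeriv_sqrt {x : ℝ} (hx : x ∈ Ioo 0 1) :
    11 * (63 / 2816 - 1163 * π / 186624) * x ^ 10 < shaferRemainderDeriv √(1 - x ^ 2) := by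
  have hx2 : x ^ 2 ≤ 1 := by nlinarith [hx.1, hx.2]
  simpa [one_sub_sqrt_one_sub_sq_sq hx2, ← pow_mul] using
    lt_shaferRemainderDeriv (sqrt_one_sub_sq_mem_Ioo hx)

lemma mul_shaferRemainderDeriv_sqrt_lt {x : ℝ} (hx : x ∈ Ioo 0 1) :
    10 * shaferRemainderDeriv √(1 - x ^ 2)
      < x * (shaferRemainderDeriv' √(1 - x ^ 2) * (-x / √(1 - x ^ 2))) := by
  have hx2 : x ^ 2 ≤ 1 := by nlinarith [hx.1, hx.2]
  have h := mul_shaferRemainderDeriv_lt (sqrt_one_sub_sq_mem_Ioo hx)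
  rw [one_sub_sqrt_one_sub_sq_sq hx2] at h
  calc _ < _ := h
    _ = _ := by ring

theorem shaferPi_n5 (x : ℝ) (hx : x ∈ Set.Ioo (0 : ℝ) 1) :
    (1 - π / 3) * x + (1 / 6 - π / 18) * x ^ 3 + (3 / 40 - 5 * π / 216) * x ^ 5
        + (5 / 112 - 17 * π / 1296) * x ^ 7 + (35 / 1152 - 269 * π / 31104) * x ^ 9
        + (63 / 2816 - 1163 * π / 186624) * x ^ 11
      < Real.arcsin x - π * x / (2 + Real.sqrt (1 - x ^ 2)) ∧
    Real.arcsin x - π * x / (2 + Real.sqrt (1 - x ^ 2))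
      < (1 - π / 3) * x + (1 / 6 - π / 18) * x ^ 3 + (3 / 40 - 5 * π / 216) * x ^ 5
        + (5 / 112 - 17 * π / 1296) * x ^ 7 + (35 / 1152 - 269 * π / 31104) * x ^ 9
        + (-(53089 / 40320) + 13493 * π / 31104) * x ^ 11 := by
  have hIoo : ∀ y ∈ Ico (0 : ℝ) 1, y ∈ Ioo (-1) 1 := fun y hy => ⟨by linarith [hy.1], hy.2⟩
  have hN y (hy : y ∈ Ico (0 : ℝ) 1) := hasDerivAt_shaferRemainder (hIoo y hy)
  have hN' y (hy : y ∈ Ico (0 : ℝ) 1) := hasDerivAt_shaferRemainderDeriv_sqrt (hIoo y hy)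
  constructor
  · have hlower := pos_of_hasDerivAt_pos
      (g := fun y => shaferRemainder y - (63 / 2816 - 1163 * π / 186624) * y ^ 11)
      (continuous_shaferRemainder.sub (by fun_prop)).continuousOn
      (fun y hy => (hN y (Ioo_subset_Ico_self hy)).sub
        ((hasDerivAt_pow 11 y).const_mul (63 / 2816 - 1163 * π / 186624)))
      (fun y hy => by linarith [lt_shaferRemainderDeriv_sqrt hy])
      (by simp [shaferRemainder_zero]) hx
    simp only [shaferRemainder] at hlower
    linarith
  · have hratio := strictMonoOn_div_pow_of_lt_mul_deriv 11
      continuous_shaferRemainder.continuousOn (fun y hy => hN y (Ioo_subset_Ico_self hy))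
      (fun y hy => by
        exact_mod_cast mul_lt_mul_deriv_of_deriv2 hN hN'
          (fun z hz => by linarith [mul_shaferRemainderDeriv_sqrt_lt hz]) shaferRemainder_zero hy)
      ⟨hx.1, hx.2.le⟩ ⟨one_pos, le_rfl⟩ hx.2
    dsimp only at hratio
    rw [shaferRemainder_one, one_pow, div_one, div_lt_iff₀ (pow_pos hx.1 11)] at hratio
    simp only [shaferRemainder] at hratio
    linarith
end

section
/- For every x ∈ (0,1): ( x⁵/60 + 11x⁷/840 + 67x⁹/6720 + 3461x¹¹/443520 + 29011x¹³/4612608 ) / (2+√(1−x²)) < arcsin x − 3x/(2+√(1−x²)) < ( x⁵/60 + 11x⁷/840 + 67x⁹/6720 + 3461x¹¹/443520 + (π − 1351643/443520)·x¹³ ) / (2+√(1−x²)). -/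
/-!
Put `s = √(1 - x²)` and `F_p(x) = arcsin x - (3x + p(x)) / (2 + s)`. Then
`F_p' = N_p / (s (2 + s)²)`, and modulo `s² = 1 - x²` the numerator is `N_p = A - B s` with
polynomials `A`, `B`, `B > 0`; so when `A > 0` its sign is that of `A² - B² (1 - x²)`.
For the lower polynomial this is `x¹⁴ R(x²)` with `R > 0` on `[0, 1]`, so `F_p` increases from
`F_p(0) = 0`. For the upper one it is `x¹² R(x²)` with `R` increasing on `[0, 1]` and changing
sign, so `F_p` decreases and then increases; it vanishes at both ends, because the coefficient
`π - 1351643/443520` of `x¹³` is exactly the one making `F_p(1) = 0`.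
-/

open Real Set

noncomputable section

def shaferError (p : ℝ → ℝ) (x : ℝ) : ℝ := arcsin x - (3 * x + p x) / (2 + √(1 - x ^ 2))

def shaferNumer (p q : ℝ → ℝ) (x : ℝ) : ℝ :=
  2 - x ^ 2 - 2 * √(1 - x ^ 2) - x * p x - √(1 - x ^ 2) * (2 + √(1 - x ^ 2)) * q x

lemma shaferError_eq (p : ℝ → ℝ) (x : ℝ) :
    shaferError p x = arcsin x - 3 * x / (2 + √(1 - x ^ 2)) - p x / (2 + √(1 - x ^ 2)) := by
  rw [shaferError, add_div, sub_sub]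

lemma shaferError_zero {p : ℝ → ℝ} (hp : p 0 = 0) : shaferError p 0 = 0 := by
  simp [shaferError, hp]

lemma shaferNumer_eq {p q : ℝ → ℝ} {x : ℝ} (hx : x ^ 2 ≤ 1) :
    shaferNumer p q x
      = 2 - x ^ 2 - x * p x - (1 - x ^ 2) * q x - (2 + 2 * q x) * √(1 - x ^ 2) := by
  rw [shaferNumer]
  linear_combination (-q x) * sq_sqrt (sub_nonneg.2 hx)

lemma continuous_shaferError {p : ℝ → ℝ} (hp : Continuous p) : Continuous (shaferError p) := by
  unfold shaferError
  exact continuous_arcsin.sub (Continuous.div (by fun_prop) (by fun_prop) fun x ↦ by positivity)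

lemma hasDerivAt_shaferError {p q : ℝ → ℝ} {x : ℝ} (hp : HasDerivAt p (q x) x)
    (hx : x ∈ Ioo (-1) 1) :
    HasDerivAt (shaferError p)
      (shaferNumer p q x / (√(1 - x ^ 2) * (2 + √(1 - x ^ 2)) ^ 2)) x := by
  have h1x : 0 < 1 - x ^ 2 := by nlinarith [hx.1, hx.2]
  have hsq := sq_sqrt h1x.le
  have hsqrt : HasDerivAt (fun y ↦ √(1 - y ^ 2)) (-x / √(1 - x ^ 2)) x := by
    convert ((hasDerivAt_pow 2 x).const_sub 1).sqrt h1x.ne' using 1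
    norm_num
    field_simp
  have := (hasDerivAt_arcsin (by linarith [hx.1]) hx.2.ne).sub
    ((((hasDerivAt_id x).const_mul 3).add hp).div (hsqrt.const_add 2) (by positivity))
  refine this.congr_deriv ?_
  simp only [shaferNumer, Pi.add_apply, id]
  field_simp
  linear_combination (-2) * hsq

lemma sqrt_one_sub_sq_pos {x : ℝ} (hx : x ∈ Ioo (-1) 1) : 0 < √(1 - x ^ 2) :=
  sqrt_pos.2 (by nlinarith [hx.1, hx.2])

lemma strictMonoOn_shaferError {p q : ℝ → ℝ} (hp : ∀ x, HasDerivAt p (q x) x) {a b : ℝ}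
    (ha : -1 ≤ a) (hb : b ≤ 1) (hN : ∀ x ∈ Ioo a b, 0 < shaferNumer p q x) :
    StrictMonoOn (shaferError p) (Icc a b) := by
  have hab : Ioo a b ⊆ Ioo (-1) 1 := Ioo_subset_Ioo ha hb
  refine strictMonoOn_of_hasDerivWithinAt_pos (convex_Icc a b)
    (f' := fun x ↦ shaferNumer p q x / (√(1 - x ^ 2) * (2 + √(1 - x ^ 2)) ^ 2))
    (continuous_shaferError (continuous_iff_continuousAt.2 (hp · |>.continuousAt))).continuousOn
    (fun x hx ↦ ?_) fun x hx ↦ ?_ <;> rw [interior_Icc] at hx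
  · exact (hasDerivAt_shaferError (hp x) (hab hx)).hasDerivWithinAt
  · have := sqrt_one_sub_sq_pos (hab hx)
    exact div_pos (hN x hx) (by positivity)

lemma strictAntiOn_shaferError {p q : ℝ → ℝ} (hp : ∀ x, HasDerivAt p (q x) x) {a b : ℝ}
    (ha : -1 ≤ a) (hb : b ≤ 1) (hN : ∀ x ∈ Ioo a b, shaferNumer p q x < 0) :
    StrictAntiOn (shaferError p) (Icc a b) := by
  have hab : Ioo a b ⊆ Ioo (-1) 1 := Ioo_subset_Ioo ha hb
  refine strictAntiOn_of_hasDerivWithinAt_neg (convex_Icc a b)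
    (f' := fun x ↦ shaferNumer p q x / (√(1 - x ^ 2) * (2 + √(1 - x ^ 2)) ^ 2))
    (continuous_shaferError (continuous_iff_continuousAt.2 (hp · |>.continuousAt))).continuousOn
    (fun x hx ↦ ?_) fun x hx ↦ ?_ <;> rw [interior_Icc] at hx
  · exact (hasDerivAt_shaferError (hp x) (hab hx)).hasDerivWithinAt
  · have := sqrt_one_sub_sq_pos (hab hx)
    exact div_neg_of_neg_of_pos (hN x hx) (by positivity)

lemma lt_max_of_strictAntiOn_of_strictMonoOn {α β : Type*} [LinearOrder α] [LinearOrder β]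
    {f : α → β} {a b c x : α} (hanti : StrictAntiOn f (Icc a c)) (hmono : StrictMonoOn f (Icc c b))
    (hx : x ∈ Ioo a b) : f x < max (f a) (f b) := by
  rcases le_or_gt x c with hxc | hxc
  · exact lt_max_of_lt_left (hanti ⟨le_rfl, hx.1.le.trans hxc⟩ ⟨hx.1.le, hxc⟩ hx.1)
  · exact lt_max_of_lt_right (hmono ⟨hxc.le, hx.2.le⟩ ⟨hxc.le.trans hx.2.le, le_rfl⟩ hx.2)

lemma mul_sqrt_lt_of_sq_lt {a b y : ℝ} (ha : 0 < a) (hb : 0 ≤ b) (h : b ^ 2 * y < a ^ 2) :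
    b * √y < a := by
  rw [← sqrt_sq hb, ← sqrt_mul (sq_nonneg b), sqrt_lt' ha]
  exact h

lemma lt_mul_sqrt_of_sq_lt {a b y : ℝ} (hb : 0 ≤ b) (h : a ^ 2 < b ^ 2 * y) : a < b * √y := by
  rw [← sqrt_sq hb, ← sqrt_mul (sq_nonneg b)]
  exact lt_sqrt_of_sq_lt h

lemma pow_mul_one_sub_le {t : ℝ} (ht : t ∈ Icc 0 1) {n : ℕ} (hn : n ≠ 0) :
    t ^ n * (1 - t) ≤ 1 / 4 := by
  have := pow_le_of_le_one ht.1 ht.2 hn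
  nlinarith [sq_nonneg (t - 1 / 2), sub_nonneg.2 ht.2]

def lowerPoly (x : ℝ) : ℝ :=
  x ^ 5 / 60 + 11 * x ^ 7 / 840 + 67 * x ^ 9 / 6720 + 3461 * x ^ 11 / 443520
    + 29011 * x ^ 13 / 4612608

def lowerPolyDeriv (x : ℝ) : ℝ :=
  x ^ 4 / 12 + 11 * x ^ 6 / 120 + 603 * x ^ 8 / 6720 + 38071 * x ^ 10 / 443520
    + 377143 * x ^ 12 / 4612608

lemma hasDerivAt_lowerPoly (x : ℝ) : HasDerivAt lowerPoly (lowerPolyDeriv x) x := by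
  have := (((((hasDerivAt_pow 5 x).div_const 60).add
    (((hasDerivAt_pow 7 x).const_mul 11).div_const 840)).add
    (((hasDerivAt_pow 9 x).const_mul 67).div_const 6720)).add
    (((hasDerivAt_pow 11 x).const_mul 3461).div_const 443520)).add
    (((hasDerivAt_pow 13 x).const_mul 29011).div_const 4612608)
  refine this.congr_deriv ?_
  norm_num [lowerPolyDeriv]
  ring

def lowerA (x : ℝ) : ℝ :=
  2 - x ^ 2 - x ^ 4 / 12 - x ^ 6 / 40 - 5 * x ^ 8 / 448 - 7 * x ^ 10 / 1152 - 21 * x ^ 12 / 5632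
    + 29011 * x ^ 14 / 384384

def lowerB (x : ℝ) : ℝ :=
  2 + x ^ 4 / 6 + 11 * x ^ 6 / 60 + 201 * x ^ 8 / 1120 + 3461 * x ^ 10 / 20160
    + 29011 * x ^ 12 / 177408

def lowerR (y : ℝ) : ℝ :=
  239711 / 256256 - 32571211 * y / 184504320 + 2920343 * y ^ 2 / 184504320
    + 6588713 * y ^ 3 / 221405184 + 1569492091 * y ^ 4 / 51661209600
    + 785336333 * y ^ 5 / 27552645120 + 10711006255 * y ^ 6 / 409156780032
    + 841638121 * y ^ 7 / 147751059456

lemma shaferNumer_lowerPoly {x : ℝ} (hx : x ^ 2 ≤ 1) :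
    shaferNumer lowerPoly lowerPolyDeriv x = lowerA x - lowerB x * √(1 - x ^ 2) := by
  rw [shaferNumer_eq hx]
  simp only [lowerPoly, lowerPolyDeriv, lowerA, lowerB]
  ring

lemma lowerA_sq_sub_lowerB_sq (x : ℝ) :
    lowerA x ^ 2 - lowerB x ^ 2 * (1 - x ^ 2) = x ^ 14 * lowerR (x ^ 2) := by
  simp only [lowerA, lowerB, lowerR]
  ring

lemma lowerR_pos {y : ℝ} (hy : y ∈ Icc 0 1) : 0 < lowerR y := by
  obtain ⟨h0, h1⟩ := hy
  simp only [lowerR]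
  nlinarith [pow_nonneg h0 2, pow_nonneg h0 3, pow_nonneg h0 4, pow_nonneg h0 5, pow_nonneg h0 6,
    pow_nonneg h0 7]

lemma lowerA_gt {x : ℝ} (hx : x ∈ Icc 0 1) : 87 / 100 < lowerA x := by
  obtain ⟨h0, h1⟩ := hx
  simp only [lowerA]
  nlinarith [pow_le_one₀ h0 h1 (n := 2), pow_le_one₀ h0 h1 (n := 4), pow_le_one₀ h0 h1 (n := 6),
    pow_le_one₀ h0 h1 (n := 8), pow_le_one₀ h0 h1 (n := 10), pow_le_one₀ h0 h1 (n := 12),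
    pow_nonneg h0 14]

lemma lowerB_pos (x : ℝ) : 0 < lowerB x := by
  simp only [lowerB]
  positivity

lemma shaferNumer_lowerPoly_pos {x : ℝ} (hx : x ∈ Ioo 0 1) :
    0 < shaferNumer lowerPoly lowerPolyDeriv x := by
  have hx' : x ∈ Icc 0 1 := Ioo_subset_Icc_self hx
  have hx2 : x ^ 2 ∈ Icc 0 1 := ⟨sq_nonneg x, pow_le_one₀ hx'.1 hx'.2⟩
  have hR : 0 < x ^ 14 * lowerR (x ^ 2) := mul_pos (pow_pos hx.1 14) (lowerR_pos hx2)
  rw [shaferNumer_lowerPoly hx2.2, sub_pos]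
  refine mul_sqrt_lt_of_sq_lt ((lowerA_gt hx').trans' (by norm_num)) (lowerB_pos x).le ?_
  linarith [lowerA_sq_sub_lowerB_sq x]

lemma shaferError_lowerPoly_pos {x : ℝ} (hx : x ∈ Ioc 0 1) : 0 < shaferError lowerPoly x := by
  have hmono := strictMonoOn_shaferError hasDerivAt_lowerPoly (by norm_num) le_rfl
    fun y hy ↦ shaferNumer_lowerPoly_pos hy
  simpa [shaferError_zero (by norm_num [lowerPoly] : lowerPoly 0 = 0)]
    using hmono ⟨le_rfl, zero_le_one⟩ (Ioc_subset_Icc_self hx) hx.1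

def shaferGap : ℝ := π - 70430491 / 23063040

lemma shaferGap_gt : 877 / 10000 < shaferGap := by
  have := pi_gt_d6
  rw [shaferGap]
  norm_num at this ⊢
  linarith

lemma shaferGap_lt : shaferGap < 878 / 10000 := by
  have := pi_lt_d6
  rw [shaferGap]
  norm_num at this ⊢
  linarith

def upperPoly (x : ℝ) : ℝ :=
  x ^ 5 / 60 + 11 * x ^ 7 / 840 + 67 * x ^ 9 / 6720 + 3461 * x ^ 11 / 443520
    + (π - 1351643 / 443520) * x ^ 13

lemma upperPoly_eq (x : ℝ) : upperPoly x = lowerPoly x + shaferGap * x ^ 13 := by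
  simp only [upperPoly, lowerPoly, shaferGap]
  ring

lemma upperPoly_one : upperPoly 1 = π - 3 := by
  norm_num [upperPoly]
  ring

def upperPolyDeriv (x : ℝ) : ℝ := lowerPolyDeriv x + 13 * shaferGap * x ^ 12

lemma hasDerivAt_upperPoly (x : ℝ) : HasDerivAt upperPoly (upperPolyDeriv x) x := by
  rw [funext upperPoly_eq]
  refine ((hasDerivAt_lowerPoly x).add ((hasDerivAt_pow 13 x).const_mul shaferGap)).congr_deriv ?_
  norm_num [upperPolyDeriv]
  ring

def upperA (x : ℝ) : ℝ := lowerA x - 13 * shaferGap * x ^ 12 + 12 * shaferGap * x ^ 14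

def upperB (x : ℝ) : ℝ := lowerB x + 26 * shaferGap * x ^ 12

def upperR (y : ℝ) : ℝ :=
  -156 * shaferGap + (239711 / 256256 + 178 * shaferGap) * y
    + (-(32571211 / 184504320) - 61 * shaferGap / 2) * y ^ 2
    + (2920343 / 184504320 - 133 * shaferGap / 60) * y ^ 3
    + (6588713 / 221405184 - 73 * shaferGap / 672) * y ^ 4
    + (1569492091 / 51661209600 + 661 * shaferGap / 2240) * y ^ 5
    + (785336333 / 27552645120 + 332543 * shaferGap / 887040 - 507 * shaferGap ^ 2) * y ^ 6
    + (10711006255 / 409156780032 + 286141 * shaferGap / 44352 + 364 * shaferGap ^ 2) * y ^ 7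
    + (841638121 / 147751059456 + 29011 * shaferGap / 16016 + 144 * shaferGap ^ 2) * y ^ 8

def upperRDeriv (y : ℝ) : ℝ :=
  (239711 / 256256 + 178 * shaferGap)
    + 2 * (-(32571211 / 184504320) - 61 * shaferGap / 2) * y
    + 3 * (2920343 / 184504320 - 133 * shaferGap / 60) * y ^ 2
    + 4 * (6588713 / 221405184 - 73 * shaferGap / 672) * y ^ 3
    + 5 * (1569492091 / 51661209600 + 661 * shaferGap / 2240) * y ^ 4
    + 6 * (785336333 / 27552645120 + 332543 * shaferGap / 887040 - 507 * shaferGap ^ 2) * y ^ 5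
    + 7 * (10711006255 / 409156780032 + 286141 * shaferGap / 44352 + 364 * shaferGap ^ 2) * y ^ 6
    + 8 * (841638121 / 147751059456 + 29011 * shaferGap / 16016 + 144 * shaferGap ^ 2) * y ^ 7

lemma shaferNumer_upperPoly {x : ℝ} (hx : x ^ 2 ≤ 1) :
    shaferNumer upperPoly upperPolyDeriv x = upperA x - upperB x * √(1 - x ^ 2) := by
  rw [shaferNumer_eq hx]
  simp only [upperPoly_eq, upperPolyDeriv, lowerPoly, lowerPolyDeriv, upperA, upperB, lowerA,
    lowerB]
  ring

lemma upperA_sq_sub_upperB_sq (x : ℝ) :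
    upperA x ^ 2 - upperB x ^ 2 * (1 - x ^ 2) = x ^ 12 * upperR (x ^ 2) := by
  simp only [upperA, upperB, lowerA, lowerB, upperR]
  ring

lemma hasDerivAt_upperR (y : ℝ) : HasDerivAt upperR (upperRDeriv y) y := by
  have := ((((((((hasDerivAt_const y (-156 * shaferGap)).add
    ((hasDerivAt_id y).const_mul (239711 / 256256 + 178 * shaferGap))).add
    ((hasDerivAt_pow 2 y).const_mul (-(32571211 / 184504320) - 61 * shaferGap / 2))).add
    ((hasDerivAt_pow 3 y).const_mul (2920343 / 184504320 - 133 * shaferGap / 60))).add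
    ((hasDerivAt_pow 4 y).const_mul (6588713 / 221405184 - 73 * shaferGap / 672))).add
    ((hasDerivAt_pow 5 y).const_mul (1569492091 / 51661209600 + 661 * shaferGap / 2240))).add
    ((hasDerivAt_pow 6 y).const_mul
      (785336333 / 27552645120 + 332543 * shaferGap / 887040 - 507 * shaferGap ^ 2))).add
    ((hasDerivAt_pow 7 y).const_mul
      (10711006255 / 409156780032 + 286141 * shaferGap / 44352 + 364 * shaferGap ^ 2))).add
    ((hasDerivAt_pow 8 y).const_mul
      (841638121 / 147751059456 + 29011 * shaferGap / 16016 + 144 * shaferGap ^ 2))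
  refine this.congr_deriv ?_
  norm_num [upperRDeriv]
  ring

lemma upperRDeriv_pos {y : ℝ} (hy : y ∈ Icc 0 1) : 0 < upperRDeriv y := by
  obtain ⟨h0, h1⟩ := hy
  have hg₁ := shaferGap_gt
  have hg₂ := shaferGap_lt
  set g := shaferGap
  have c1 : 33 / 2 ≤ 239711 / 256256 + 178 * g := by linarith
  have c2 : -(571 / 100) ≤ 2 * (-(32571211 / 184504320) - 61 * g / 2) := by linarith
  have c3 : -(27 / 50) ≤ 3 * (2920343 / 184504320 - 133 * g / 60) := by linarith
  have c4 : 0 ≤ 4 * (6588713 / 221405184 - 73 * g / 672) := by linarith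
  have c5 : 0 ≤ 5 * (1569492091 / 51661209600 + 661 * g / 2240) := by linarith
  have c6 : -(231 / 10) ≤ 6 * (785336333 / 27552645120 + 332543 * g / 887040 - 507 * g ^ 2) := by
    nlinarith
  have c7 : 231 / 10 ≤ 7 * (10711006255 / 409156780032 + 286141 * g / 44352 + 364 * g ^ 2) := by
    nlinarith
  have c8 : 0 ≤ 8 * (841638121 / 147751059456 + 29011 * g / 16016 + 144 * g ^ 2) := by
    nlinarith
  have hbump := pow_mul_one_sub_le ⟨h0, h1⟩ (n := 5) (by norm_num)
  have hcoeff : 33 / 2 - 571 / 100 * y - 27 / 50 * y ^ 2 - 231 / 10 * (y ^ 5 * (1 - y))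
      ≤ upperRDeriv y := by
    rw [upperRDeriv]
    nlinarith [mul_le_mul_of_nonneg_right c2 h0, mul_le_mul_of_nonneg_right c3 (pow_nonneg h0 2),
      mul_nonneg c4 (pow_nonneg h0 3), mul_nonneg c5 (pow_nonneg h0 4),
      mul_le_mul_of_nonneg_right c6 (pow_nonneg h0 5),
      mul_le_mul_of_nonneg_right c7 (pow_nonneg h0 6), mul_nonneg c8 (pow_nonneg h0 7)]
  nlinarith

lemma strictMonoOn_upperR : StrictMonoOn upperR (Icc 0 1) := by
  refine strictMonoOn_of_hasDerivWithinAt_pos (convex_Icc 0 1)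
    (fun y _ ↦ (hasDerivAt_upperR y).continuousAt.continuousWithinAt)
    (fun y _ ↦ (hasDerivAt_upperR y).hasDerivWithinAt) fun y hy ↦ ?_
  exact upperRDeriv_pos (interior_subset hy)

lemma upperR_zero_neg : upperR 0 < 0 := by
  have := shaferGap_gt
  norm_num [upperR]
  linarith

lemma upperR_one_pos : 0 < upperR 1 := by
  have hg₁ := shaferGap_gt
  have hg₂ := shaferGap_lt
  norm_num [upperR]
  nlinarith

lemma upperA_pos {x : ℝ} (hx : x ∈ Icc 0 1) : 0 < upperA x := by
  obtain ⟨h0, h1⟩ := hx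
  have hg₁ := shaferGap_gt
  have hg₂ := shaferGap_lt
  have hA := lowerA_gt ⟨h0, h1⟩
  have hbump := pow_mul_one_sub_le ⟨sq_nonneg x, pow_le_one₀ h0 h1⟩ (n := 6) (by norm_num)
  have : x ^ 12 * (13 - 12 * x ^ 2) ≤ 4 := by nlinarith [pow_le_one₀ (n := 12) h0 h1]
  rw [upperA]
  nlinarith [mul_le_mul_of_nonneg_left this (shaferGap_gt.le.trans' (by norm_num) : 0 ≤ shaferGap)]

lemma upperB_pos (x : ℝ) : 0 < upperB x := by
  have := shaferGap_gt
  have := lowerB_pos x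
  rw [upperB]
  positivity

lemma shaferNumer_upperPoly_neg {x : ℝ} (hx : x ∈ Ioo 0 1) (hR : upperR (x ^ 2) < 0) :
    shaferNumer upperPoly upperPolyDeriv x < 0 := by
  have := mul_neg_of_pos_of_neg (pow_pos hx.1 12) hR
  rw [shaferNumer_upperPoly (pow_le_one₀ hx.1.le hx.2.le), sub_neg]
  refine lt_mul_sqrt_of_sq_lt (upperB_pos x).le ?_
  linarith [upperA_sq_sub_upperB_sq x]

lemma shaferNumer_upperPoly_pos {x : ℝ} (hx : x ∈ Ioo 0 1) (hR : 0 < upperR (x ^ 2)) :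
    0 < shaferNumer upperPoly upperPolyDeriv x := by
  have := mul_pos (pow_pos hx.1 12) hR
  rw [shaferNumer_upperPoly (pow_le_one₀ hx.1.le hx.2.le), sub_pos]
  refine mul_sqrt_lt_of_sq_lt (upperA_pos (Ioo_subset_Icc_self hx)) (upperB_pos x).le ?_
  linarith [upperA_sq_sub_upperB_sq x]

lemma shaferError_upperPoly_one : shaferError upperPoly 1 = 0 := by
  norm_num [shaferError, upperPoly_one]

lemma shaferError_upperPoly_neg {x : ℝ} (hx : x ∈ Ioo 0 1) : shaferError upperPoly x < 0 := by
  have hR : StrictMonoOn (fun t ↦ upperR (t ^ 2)) (Icc 0 1) :=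
    strictMonoOn_upperR.comp ((pow_left_strictMonoOn₀ two_ne_zero).mono fun t ht ↦ ht.1)
      fun t ht ↦ ⟨sq_nonneg t, pow_le_one₀ ht.1 ht.2⟩
  have hRcont : ContinuousOn (fun t ↦ upperR (t ^ 2)) (Icc 0 1) := fun t _ ↦
    ((hasDerivAt_upperR _).continuousAt.comp (continuous_pow 2).continuousAt).continuousWithinAt
  obtain ⟨c, hc, hcR⟩ : ∃ c ∈ Ioo 0 1, upperR (c ^ 2) = 0 :=
    intermediate_value_Ioo zero_le_one hRcont
      ⟨by simpa using upperR_zero_neg, by simpa using upperR_one_pos⟩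
  have hanti := strictAntiOn_shaferError hasDerivAt_upperPoly (by norm_num) hc.2.le
    fun y hy ↦ shaferNumer_upperPoly_neg ⟨hy.1, hy.2.trans hc.2⟩
      (hcR ▸ hR ⟨hy.1.le, hy.2.le.trans hc.2.le⟩ (Ioo_subset_Icc_self hc) hy.2)
  have hmono := strictMonoOn_shaferError hasDerivAt_upperPoly (by linarith [hc.1]) le_rfl
    fun y hy ↦ shaferNumer_upperPoly_pos ⟨hc.1.trans hy.1, hy.2⟩
      (hcR ▸ hR (Ioo_subset_Icc_self hc) ⟨hc.1.le.trans hy.1.le, hy.2.le⟩ hy.1)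
  simpa [shaferError_zero (by norm_num [upperPoly] : upperPoly 0 = 0), shaferError_upperPoly_one]
    using lt_max_of_strictAntiOn_of_strictMonoOn hanti hmono hx

end

theorem shaferE_n6 (x : ℝ) (hx : x ∈ Set.Ioo (0 : ℝ) 1) :
    (x ^ 5 / 60 + 11 * x ^ 7 / 840 + 67 * x ^ 9 / 6720 + 3461 * x ^ 11 / 443520
        + 29011 * x ^ 13 / 4612608) / (2 + Real.sqrt (1 - x ^ 2))
      < Real.arcsin x - 3 * x / (2 + Real.sqrt (1 - x ^ 2)) ∧
    Real.arcsin x - 3 * x / (2 + Real.sqrt (1 - x ^ 2))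
      < (x ^ 5 / 60 + 11 * x ^ 7 / 840 + 67 * x ^ 9 / 6720 + 3461 * x ^ 11 / 443520
          + (π - 1351643 / 443520) * x ^ 13) / (2 + Real.sqrt (1 - x ^ 2)) := by
  have hlower := shaferError_lowerPoly_pos (Ioo_subset_Ioc_self hx)
  have hupper := shaferError_upperPoly_neg hx
  rw [shaferError_eq] at hlower hupper
  exact ⟨sub_pos.1 hlower, sub_neg.1 hupper⟩
end
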